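/- arXiv:1601.04999 — 3 statements merged into one kernel-verified Lean document; each statement's English description precedes it below -/
import Mathlib

section
/- Let p be an odd prime, and for k ≥ 1 let Φ_{p^k} denote the p^k-th cyclotomic polynomial. Then, coefficientwise and p-adically, lim_{n→∞} (1/p^{n+1}) ∏_{k=1}^{n} Φ_{p^k}(1+X) = log(1+X)/(pX) as elements of Q_p[[X]], where log(1+X) = ∑_{m≥1} (-1)^{m+1} X^m/m. -/
open Polynomial Filter
open scoped Nat

private lemma hockey (N d : ℕ) : ∑ i ∈ Finset.range N, i.choose d = N.choose (d + 1) := by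
  induction N with
  | zero => simp
  | succ N ih =>
    rw [Finset.sum_range_succ, ih, Nat.choose_succ_succ']
    exact Nat.add_comm _ _

private lemma prod_cyc_geom (p : ℕ) [hp : Fact p.Prime] (n : ℕ) :
    (∏ k ∈ Finset.Icc 1 n, cyclotomic (p ^ k) ℚ_[p]) =
      ∑ i ∈ Finset.range (p ^ n), (X : ℚ_[p][X]) ^ i := by
  induction n with
  | zero => simp
  | succ n ih =>
    have h1 : (1 : ℕ) ≤ n + 1 := by omega
    rw [Finset.prod_Icc_succ_top h1, ih, cyclotomic_prime_pow_eq_geom_sum hp.out]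
    apply mul_right_cancel₀ (b := (X : ℚ_[p][X]) - 1)
    · have h : ((X : ℚ_[p][X]) - 1) = X - C 1 := by simp
      rw [h]
      exact X_sub_C_ne_zero 1
    · calc ((∑ i ∈ Finset.range (p ^ n), (X : ℚ_[p][X]) ^ i) *
            ∑ i ∈ Finset.range p, (X ^ p ^ n) ^ i) * (X - 1)
          = (∑ i ∈ Finset.range p, ((X : ℚ_[p][X]) ^ p ^ n) ^ i) *
            ((∑ i ∈ Finset.range (p ^ n), X ^ i) * (X - 1)) := by ring
        _ = (∑ i ∈ Finset.range p, ((X : ℚ_[p][X]) ^ p ^ n) ^ i) * (X ^ p ^ n - 1) := by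
            rw [geom_sum_mul]
        _ = ((X : ℚ_[p][X]) ^ p ^ n) ^ p - 1 := geom_sum_mul _ p
        _ = (X : ℚ_[p][X]) ^ p ^ (n + 1) - 1 := by rw [← pow_mul, ← pow_succ]
        _ = (∑ i ∈ Finset.range (p ^ (n + 1)), (X : ℚ_[p][X]) ^ i) * (X - 1) :=
            (geom_sum_mul _ _).symm

private lemma descPoch_eval_neg_one (p : ℕ) [Fact p.Prime] (d : ℕ) :
    (descPochhammer ℚ_[p] d).eval (-1) = (-1) ^ d * d ! := by
  induction d with
  | zero => simp
  | succ d ih =>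
    rw [descPochhammer_succ_right, eval_mul, ih, eval_sub, eval_X, eval_natCast,
      Nat.factorial_succ]
    push_cast
    ring

/-- for an odd prime `p`, the partial products
`(1/p^{n+1}) ∏_{k=1}^n Φ_{p^k}(1+X)` converge coefficientwise (`p`-adically) to the
power series `log(1+X)/(pX) = ∑_{d ≥ 0} (-1)^d X^d / ((d+1)p)`. -/
theorem stmt_0 (p : ℕ) [Fact p.Prime] (hodd : Odd p) :
    ∀ d : ℕ,
      Tendsto
        (fun n : ℕ =>
          ((p : ℚ_[p]) ^ (n + 1))⁻¹ *
            (∏ k ∈ Finset.Icc 1 n, (cyclotomic (p ^ k) ℚ_[p]).comp (X + 1)).coeff d)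
        atTop (nhds ((-1 : ℚ_[p]) ^ d / (((d : ℚ_[p]) + 1) * (p : ℚ_[p])))) := by
  intro d
  have hp0 : (p : ℚ_[p]) ≠ 0 := by
    exact_mod_cast (Nat.cast_ne_zero (R := ℚ_[p])).mpr (Fact.out : p.Prime).ne_zero
  have hd1 : ((d + 1)! : ℚ_[p]) ≠ 0 := by
    exact_mod_cast (Nat.cast_ne_zero (R := ℚ_[p])).mpr (Nat.factorial_ne_zero _)
  -- step 1: identify the coefficient with a binomial coefficient
  have hcoeff : ∀ n : ℕ,
      (∏ k ∈ Finset.Icc 1 n, (cyclotomic (p ^ k) ℚ_[p]).comp (X + 1)).coeff d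
        = ((p ^ n).choose (d + 1) : ℚ_[p]) := by
    intro n
    rw [← Polynomial.prod_comp, prod_cyc_geom p n]
    have : ((∑ i ∈ Finset.range (p ^ n), (X : ℚ_[p][X]) ^ i).comp (X + 1))
        = ∑ i ∈ Finset.range (p ^ n), ((X : ℚ_[p][X]) + 1) ^ i := by
      simp [Polynomial.eval₂_finset_sum, Polynomial.comp]
    rw [this, Polynomial.finset_sum_coeff]
    simp only [Polynomial.coeff_X_add_one_pow]
    rw [← Nat.cast_sum, hockey]
  -- step 2: express the binomial coefficient via the descending Pochhammer polynomial
  have hbin : ∀ n : ℕ,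
      ((p : ℚ_[p]) ^ (n + 1))⁻¹ * ((p ^ n).choose (d + 1) : ℚ_[p])
        = (descPochhammer ℚ_[p] d).eval ((p : ℚ_[p]) ^ n - 1) / ((p : ℚ_[p]) * ((d + 1)!)) := by
    intro n
    have h1 : ((d + 1)! : ℚ_[p]) * ((p ^ n).choose (d + 1) : ℚ_[p])
        = (descPochhammer ℚ_[p] (d + 1)).eval (((p ^ n : ℕ) : ℚ_[p])) := by
      rw [descPochhammer_eval_eq_descFactorial, Nat.descFactorial_eq_factorial_mul_choose]
      push_cast
      ring
    have h2 : (descPochhammer ℚ_[p] (d + 1)).eval (((p ^ n : ℕ) : ℚ_[p]))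
        = ((p : ℚ_[p]) ^ n) * (descPochhammer ℚ_[p] d).eval ((p : ℚ_[p]) ^ n - 1) := by
      rw [descPochhammer_succ_left, eval_mul, eval_X, eval_comp, eval_sub, eval_X, eval_one]
      push_cast
      ring
    have hchoose : ((p ^ n).choose (d + 1) : ℚ_[p])
        = ((p : ℚ_[p]) ^ n) * (descPochhammer ℚ_[p] d).eval ((p : ℚ_[p]) ^ n - 1) / ((d + 1)!) := by
      field_simp
      rw [mul_comm, h1, h2]
    rw [hchoose]
    rw [pow_succ]
    field_simp
  simp only [hcoeff, hbin]
  -- step 3: take the limit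
  have hlim : Tendsto (fun n : ℕ => (p : ℚ_[p]) ^ n - 1) atTop (nhds (-1)) := by
    have h := tendsto_pow_atTop_nhds_zero_of_norm_lt_one (Padic.norm_p_lt_one (p := p))
    simpa using h.sub_const 1
  have hcont := ((descPochhammer ℚ_[p] d).continuous.tendsto (-1)).comp hlim
  have := hcont.div_const ((p : ℚ_[p]) * ((d + 1)!))
  convert this using 2
  · rfl
  rw [descPoch_eval_neg_one]
  rw [show ((d + 1)! : ℚ_[p]) = ((d : ℚ_[p]) + 1) * (d !) by
    rw [Nat.factorial_succ]; push_cast; ring]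
  have hdf : ((d ! : ℚ_[p])) ≠ 0 := by
    exact_mod_cast (Nat.cast_ne_zero (R := ℚ_[p])).mpr (Nat.factorial_ne_zero _)
  have hd1' : ((d : ℚ_[p]) + 1) ≠ 0 := by
    exact_mod_cast (Nat.cast_ne_zero (R := ℚ_[p])).mpr (Nat.succ_ne_zero d)
  field_simp
end

section
/- Let p be a prime, g = g_+ + g_-, C ∈ GL_g(Z_p), and for n ≥ 1 set C_n = diag(I_{g_-}, Φ_{p^n}(1+X) I_{g_+}) · C^{-1} and C*_n = diag(Φ_{p^n}(1+X) I_{g_-}, I_{g_+}) · C^t, where Φ_{p^n} is the p^n-th cyclotomic polynomial. With C_φ = C·diag(I_{g_-},(1/p)I_{g_+}) and C*_φ = (1/p)(C_φ^{-1})^t, one has for every n ≥ 1 the identity (C_1^t ⋯ C_n^t (C_φ^t)^{n+1}) · ((C*_φ)^{n+1} C*_n ⋯ C*_1) = (1/p^{n+1}) ∏_{k=1}^{n} Φ_{p^k}(1+X) · I_g as g×g matrices over Q_p[X]. -/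
open Matrix Polynomial

variable (p : ℕ) [Fact p.Prime] {gm gp : ℕ}

/-- `Φ_{p^k}(1+X)` as a polynomial over `ℚ_p`. -/
noncomputable def PhiP (k : ℕ) : ℚ_[p][X] :=
  (cyclotomic (p ^ k) ℚ_[p]).comp (X + 1)

/-- `C_φ = C · diag(I_{g_-}, (1/p) I_{g_+})`. -/
noncomputable def Cphi (C : Matrix (Fin gm ⊕ Fin gp) (Fin gm ⊕ Fin gp) ℚ_[p]) :
    Matrix (Fin gm ⊕ Fin gp) (Fin gm ⊕ Fin gp) ℚ_[p] :=
  C * fromBlocks (1 : Matrix (Fin gm) (Fin gm) ℚ_[p]) 0 0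
    ((p : ℚ_[p])⁻¹ • (1 : Matrix (Fin gp) (Fin gp) ℚ_[p]))

/-- `C*_φ = (1/p)·(C_φ⁻¹)ᵗ`. -/
noncomputable def Cstarphi (C : Matrix (Fin gm ⊕ Fin gp) (Fin gm ⊕ Fin gp) ℚ_[p]) :
    Matrix (Fin gm ⊕ Fin gp) (Fin gm ⊕ Fin gp) ℚ_[p] :=
  (p : ℚ_[p])⁻¹ • ((Cphi p C)⁻¹)ᵀ

/-- `C_n = diag(I_{g_-}, Φ_{p^n}(1+X) I_{g_+}) · C⁻¹`, a matrix over `ℚ_p[X]`. -/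
noncomputable def Cmat (C : Matrix (Fin gm ⊕ Fin gp) (Fin gm ⊕ Fin gp) ℚ_[p]) (n : ℕ) :
    Matrix (Fin gm ⊕ Fin gp) (Fin gm ⊕ Fin gp) ℚ_[p][X] :=
  fromBlocks (1 : Matrix (Fin gm) (Fin gm) ℚ_[p][X]) 0 0
      (PhiP p n • (1 : Matrix (Fin gp) (Fin gp) ℚ_[p][X])) *
    (C⁻¹).map Polynomial.C

/-- `C*_n = diag(Φ_{p^n}(1+X) I_{g_-}, I_{g_+}) · Cᵗ`, a matrix over `ℚ_p[X]`. -/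
noncomputable def Cstarmat (C : Matrix (Fin gm ⊕ Fin gp) (Fin gm ⊕ Fin gp) ℚ_[p]) (n : ℕ) :
    Matrix (Fin gm ⊕ Fin gp) (Fin gm ⊕ Fin gp) ℚ_[p][X] :=
  fromBlocks (PhiP p n • (1 : Matrix (Fin gm) (Fin gm) ℚ_[p][X])) 0 0
      (1 : Matrix (Fin gp) (Fin gp) ℚ_[p][X]) *
    (Cᵀ).map Polynomial.C

/-! Each factor meets its partner in the middle: `C_kᵗ C*_k = Φ_{p^k}(1+X) · I`, since the
diagonal blocks `diag(1, Φ)` and `diag(Φ, 1)` multiply to `Φ · I` and `(C⁻¹)ᵗ` cancels `Cᵗ`;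
likewise `C_φᵗ C*_φ = p⁻¹ · I`. All these products are scalar, so the whole product telescopes
from the middle outwards. -/

section Telescoping

variable {R A : Type*} [CommSemiring R] [Semiring A] [Algebra R A]

theorem pow_mul_pow_eq_smul_one {a b : A} {c : R} (h : a * b = c • 1) (m : ℕ) :
    a ^ m * b ^ m = c ^ m • 1 := by
  induction m with
  | zero => simp
  | succ m ih =>
    calc a ^ (m + 1) * b ^ (m + 1) = a ^ m * (a * b) * b ^ m := by
          rw [pow_succ, pow_succ', mul_assoc, mul_assoc, mul_assoc]
      _ = c ^ (m + 1) • 1 := by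
          rw [h, mul_smul_one, smul_mul_assoc, ih, smul_smul, pow_succ']

theorem prod_range_mul_prod_range_rev_eq_smul_one {a b : ℕ → A} {c : ℕ → R}
    (h : ∀ k, a k * b k = c k • 1) (n : ℕ) :
    ((List.range n).map (fun k => a (k + 1))).prod *
        ((List.range n).map (fun k => b (n - k))).prod =
      (∏ k ∈ Finset.Icc 1 n, c k) • 1 := by
  induction n with
  | zero => simp
  | succ n ih =>
    have ha : ((List.range (n + 1)).map (fun k => a (k + 1))).prod =
        ((List.range n).map (fun k => a (k + 1))).prod * a (n + 1) := by
      simp [List.range_succ]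
    have hb : ((List.range (n + 1)).map (fun k => b (n + 1 - k))).prod =
        b (n + 1) * ((List.range n).map (fun k => b (n - k))).prod := by
      simp [List.range_succ_eq_map, Function.comp_def]
    calc _ = ((List.range n).map (fun k => a (k + 1))).prod * (a (n + 1) * b (n + 1)) *
          ((List.range n).map (fun k => b (n - k))).prod := by
          rw [ha, hb]; simp only [mul_assoc]
      _ = (∏ k ∈ Finset.Icc 1 (n + 1), c k) • 1 := by
          rw [h, mul_smul_one, smul_mul_assoc, ih, smul_smul,
            Finset.prod_Icc_succ_top (Nat.le_add_left 1 n), mul_comm]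

end Telescoping

section Blocks

variable {R : Type*} [CommSemiring R] {m n : Type*} [Fintype m] [Fintype n] [DecidableEq m]
  [DecidableEq n]

theorem fromBlocks_one_smul_mul_fromBlocks_smul_one (f : R) :
    fromBlocks (1 : Matrix m m R) 0 0 (f • 1 : Matrix n n R) *
        fromBlocks (f • 1 : Matrix m m R) 0 0 (1 : Matrix n n R) =
      f • 1 := by
  rw [fromBlocks_multiply, ← fromBlocks_one, fromBlocks_smul]
  simp

end Blocks

section Frobenius

variable (C : Matrix (Fin gm ⊕ Fin gp) (Fin gm ⊕ Fin gp) ℚ_[p])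

theorem isUnit_det_Cphi (hC : IsUnit C.det) : IsUnit (Cphi p C).det := by
  have hp : (p : ℚ_[p]) ≠ 0 := Nat.cast_ne_zero.mpr (Fact.out : p.Prime).ne_zero
  simpa [Cphi, det_fromBlocks_zero₂₁, hp] using hC

theorem Cphi_transpose_mul_Cstarphi (hC : IsUnit C.det) :
    (Cphi p C)ᵀ * Cstarphi p C = (p : ℚ_[p])⁻¹ • 1 := by
  rw [Cstarphi, Matrix.mul_smul, ← transpose_mul, nonsing_inv_mul _ (isUnit_det_Cphi p C hC),
    transpose_one]

theorem Cmat_transpose_mul_Cstarmat (hC : IsUnit C.det) (k : ℕ) :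
    (Cmat p C k)ᵀ * Cstarmat p C k = PhiP p k • 1 := by
  have hdiag : (fromBlocks (1 : Matrix (Fin gm) (Fin gm) ℚ_[p][X]) 0 0
      (PhiP p k • (1 : Matrix (Fin gp) (Fin gp) ℚ_[p][X])))ᵀ =
      fromBlocks 1 0 0 (PhiP p k • 1) := by
    simp [fromBlocks_transpose]
  rw [Cmat, Cstarmat, transpose_mul, hdiag, Matrix.mul_assoc,
    ← Matrix.mul_assoc (fromBlocks _ _ _ _), fromBlocks_one_smul_mul_fromBlocks_smul_one,
    Matrix.smul_mul, Matrix.one_mul, Matrix.mul_smul,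
    ← transpose_map, ← Matrix.map_mul, ← transpose_mul, mul_nonsing_inv _ hC, transpose_one,
    Matrix.map_one _ (map_zero _) (map_one _)]

theorem Cphi_map_transpose_mul_Cstarphi_map (hC : IsUnit C.det) :
    ((Cphi p C).map Polynomial.C)ᵀ * (Cstarphi p C).map Polynomial.C =
      Polynomial.C (p : ℚ_[p])⁻¹ • 1 := by
  rw [← transpose_map, ← Matrix.map_mul, Cphi_transpose_mul_Cstarphi p C hC]
  ext i j
  simp [one_apply, apply_ite]

end Frobenius

theorem stmt_2 (C : Matrix (Fin gm ⊕ Fin gp) (Fin gm ⊕ Fin gp) ℚ_[p])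
    (hCdet : ‖C.det‖ = 1) (n : ℕ) :
    (((List.range n).map (fun k => (Cmat p C (k + 1))ᵀ)).prod *
          (((Cphi p C).map Polynomial.C)ᵀ) ^ (n + 1)) *
        (((Cstarphi p C).map Polynomial.C) ^ (n + 1) *
          ((List.range n).map (fun k => Cstarmat p C (n - k))).prod) =
      (Polynomial.C (((p : ℚ_[p]) ^ (n + 1))⁻¹) * ∏ k ∈ Finset.Icc 1 n, PhiP p k) •
        (1 : Matrix (Fin gm ⊕ Fin gp) (Fin gm ⊕ Fin gp) ℚ_[p][X]) := by
  have hC : IsUnit C.det := isUnit_iff_ne_zero.mpr (norm_ne_zero_iff.mp (by simp [hCdet]))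
  have hphi := pow_mul_pow_eq_smul_one (Cphi_map_transpose_mul_Cstarphi_map p C hC) (n + 1)
  have htele := prod_range_mul_prod_range_rev_eq_smul_one (Cmat_transpose_mul_Cstarmat p C hC) n
  rw [Matrix.mul_assoc, ← Matrix.mul_assoc (_ ^ _), hphi, smul_mul_assoc, Matrix.one_mul,
    mul_smul_comm, htele, smul_smul, ← map_pow, inv_pow]
end

section
/- Let R be a commutative ring, M a free R-module of rank g with basis v_1,…,v_g, and Col_1,…,Col_g : N → R module homomorphisms from an R-module N. Suppose that for each k ∈ {1,…,g} there exists z_k ∈ N with Col_j(z_k) = 0 for all j ≠ k and Col_k(z_k) a non-zero-divisor in R. Fix I ⊆ {1,…,g} and let K_I = ∩_{i∈I} ker(Col_i). If B : N × N' → R is an R-bilinear pairing into a domain R and z' ∈ N' satisfies B(z, z') = 0 for all z ∈ K_I, and moreover B(z,z') = ∑_{k=1}^{g} Col_k(z)·Col'_k(z') for some maps Col'_k : N' → R, then Col'_k(z') = 0 for all k ∉ I. -/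
theorem Fintype.sum_mul_eq_of_forall_ne_eq_zero {ι R : Type*} [Fintype ι]
    [NonUnitalNonAssocSemiring R] (f c : ι → R) {k : ι} (hf : ∀ j ≠ k, f j = 0) :
    ∑ j, f j * c j = f k * c k :=
  Fintype.sum_eq_single k fun j hj => by rw [hf j hj, zero_mul]

theorem Fintype.eq_zero_of_sum_mul_eq_zero {ι R : Type*} [Fintype ι]
    [NonUnitalNonAssocSemiring R] [NoZeroDivisors R] {f c : ι → R} {k : ι} (hf : ∀ j ≠ k, f j = 0)
    (hfk : f k ≠ 0) (h : ∑ j, f j * c j = 0) : c k = 0 := by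
  rw [Fintype.sum_mul_eq_of_forall_ne_eq_zero f c hf] at h
  exact (mul_eq_zero.mp h).resolve_left hfk

theorem stmt_9_general (R : Type*) [CommRing R] [IsDomain R] (g : ℕ)
    (N N' : Type*) [AddCommGroup N] [Module R N] [AddCommGroup N'] [Module R N']
    (Col : Fin g → (N →ₗ[R] R)) (Col' : Fin g → (N' → R))
    (hz : ∀ k : Fin g, ∃ z : N, (∀ j : Fin g, j ≠ k → Col j z = 0) ∧ Col k z ≠ 0)
    (I : Finset (Fin g))
    (B : N →ₗ[R] N' →ₗ[R] R)
    (hdecomp : ∀ (z : N) (w : N'), B z w = ∑ k : Fin g, Col k z * Col' k w)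
    (z' : N')
    (hz' : ∀ z : N, (∀ i ∈ I, Col i z = 0) → B z z' = 0) :
    ∀ k : Fin g, k ∉ I → Col' k z' = 0 := by
  intro k hk
  obtain ⟨z, hzj, hzk⟩ := hz k
  have hz_mem : ∀ i ∈ I, Col i z = 0 := fun i hi => hzj i (ne_of_mem_of_not_mem hi hk)
  refine Fintype.eq_zero_of_sum_mul_eq_zero (f := (Col · z)) (c := (Col' · z')) hzj hzk ?_
  rw [← hdecomp]
  exact hz' z hz_mem

/-- abstract orthogonality of kernels of Coleman maps. -/
theorem stmt_9 (R : Type*) [CommRing R] [IsDomain R] (g : ℕ)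
    (M : Type*) [AddCommGroup M] [Module R M] (v : Module.Basis (Fin g) R M)
    (N N' : Type*) [AddCommGroup N] [Module R N] [AddCommGroup N'] [Module R N']
    (Col : Fin g → (N →ₗ[R] R)) (Col' : Fin g → (N' → R))
    (hz : ∀ k : Fin g, ∃ z : N, (∀ j : Fin g, j ≠ k → Col j z = 0) ∧ Col k z ≠ 0)
    (I : Finset (Fin g))
    (B : N →ₗ[R] N' →ₗ[R] R)
    (hdecomp : ∀ (z : N) (w : N'), B z w = ∑ k : Fin g, Col k z * Col' k w)
    (z' : N')
    (hz' : ∀ z : N, (∀ i ∈ I, Col i z = 0) → B z z' = 0) :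
    ∀ k : Fin g, k ∉ I → Col' k z' = 0 :=
  stmt_9_general R g N N' Col Col' hz I B hdecomp z' hz'
end
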